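/- arXiv:2307.14160 — 2 statements merged into one kernel-verified Lean document; each statement's English description precedes it below -/
import Mathlib

section
/- (Proposition 1, inequality form.) Let S be a real symmetric matrix indexed by ι = Fin q ⊕ Fin q, let λ₂ ≥ 0 and suppose λ₁ ≥ |S i j| for all i, j ∈ ι with i ≠ j. Then for every positive definite symmetric real matrix Θ indexed by ι, the diagonal matrix diag(Θ) (the matrix with the same diagonal as Θ and zeros off the diagonal) is positive definite and L(diag(Θ)) ≤ L(Θ). -/
/-!
The objective splits into three parts, each of which does not increase when the off-diagonal
entries of `Θ` are dropped. The log-determinant term is Hadamard's inequality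
`det Θ ≤ ∏ i, Θ i i`. In the linear part each off-diagonal pair contributes
`S i j * Θ j i + λ₁ * |Θ j i| ≥ 0`, since `|S i j| ≤ λ₁`. The fused-penalty blocks of `diag(Θ)`
are the diagonals of those of `Θ` (and zero off the diagonal blocks), so their ℓ1 norms can
only be smaller.
-/

open Matrix

/-- The swap permutation matrix `J = fromBlocks 0 I I 0` on `Fin q ⊕ Fin q`. -/
noncomputable def Jswap (q : ℕ) : Matrix (Fin q ⊕ Fin q) (Fin q ⊕ Fin q) ℝ :=
  Matrix.fromBlocks 0 1 1 0

/-- Entrywise ℓ1 norm of a real matrix. -/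
noncomputable def l1norm {m n : Type*} [Fintype m] [Fintype n] (A : Matrix m n ℝ) : ℝ :=
  ∑ i, ∑ j, |A i j|

/-- The pdglasso objective
`L(Θ) = -log det Θ + tr(SΘ) + λ₁‖Θ‖₁ + λ₂(‖Θ_LL - Θ_RR‖₁ + ‖Θ_LR - Θ_RL‖₁)`. -/
noncomputable def pdObjective {q : ℕ} (S : Matrix (Fin q ⊕ Fin q) (Fin q ⊕ Fin q) ℝ)
    (l1 l2 : ℝ) (Θ : Matrix (Fin q ⊕ Fin q) (Fin q ⊕ Fin q) ℝ) : ℝ :=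
  -Real.log Θ.det + (S * Θ).trace + l1 * l1norm Θ
    + l2 * (l1norm (Θ.toBlocks₁₁ - Θ.toBlocks₂₂) + l1norm (Θ.toBlocks₁₂ - Θ.toBlocks₂₁))

theorem Matrix.PosSemidef.det_le_exp_trace_sub_card {n : Type*} [Fintype n] [DecidableEq n]
    {A : Matrix n n ℝ} (hA : A.PosSemidef) : A.det ≤ Real.exp (A.trace - Fintype.card n) := by
  have hdet := hA.isHermitian.det_eq_prod_eigenvalues
  have htr := hA.isHermitian.trace_eq_sum_eigenvalues
  simp only [RCLike.ofReal_real_eq_id, id_eq] at hdet htr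
  calc A.det = ∏ i, hA.isHermitian.eigenvalues i := hdet
    _ ≤ ∏ i, Real.exp (hA.isHermitian.eigenvalues i - 1) :=
      Finset.prod_le_prod (fun i _ => hA.eigenvalues_nonneg i)
        (fun i _ => by linarith [Real.add_one_le_exp (hA.isHermitian.eigenvalues i - 1)])
    _ = Real.exp (A.trace - Fintype.card n) := by
      rw [← Real.exp_sum, Finset.sum_sub_distrib, htr]
      simp

/-- **Hadamard's inequality**: rescaled to unit diagonal, the matrix has trace `card n`, so the
previous bound (AM-GM for its eigenvalues) gives determinant at most `1`. -/
theorem Matrix.PosDef.det_le_prod_diag {n : Type*} [Fintype n] [DecidableEq n]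
    {A : Matrix n n ℝ} (hA : A.PosDef) : A.det ≤ ∏ i, A i i := by
  set s : Matrix n n ℝ := diagonal fun i => (√(A i i))⁻¹
  have hs : sᴴ = s := by simp [s]
  have hB : (s * A * s).PosSemidef := by
    simpa only [hs] using hA.posSemidef.conjTranspose_mul_mul_same s
  have hdiag : ∀ i, (s * A * s) i i = 1 := fun i => by
    have hpos : 0 < A i i := hA.diag_pos
    simp only [s, diagonal_mul, mul_diagonal]
    rw [mul_right_comm, ← mul_inv, Real.mul_self_sqrt hpos.le, inv_mul_cancel₀ hpos.ne']
  have hprod : 0 < ∏ i, A i i := Finset.prod_pos fun i _ => hA.diag_pos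
  have hdetB : (s * A * s).det = A.det / ∏ i, A i i := by
    have hsq : (∏ i, (√(A i i))⁻¹) * ∏ i, (√(A i i))⁻¹ = (∏ i, A i i)⁻¹ := by
      rw [← Finset.prod_mul_distrib, ← Finset.prod_inv_distrib]
      exact Finset.prod_congr rfl fun i _ => by rw [← mul_inv, Real.mul_self_sqrt hA.diag_pos.le]
    rw [det_mul, det_mul, det_diagonal, div_eq_mul_inv, ← hsq]
    ring
  have htrB : (s * A * s).trace = Fintype.card n := by simp [trace, hdiag]
  have := hB.det_le_exp_trace_sub_card
  rw [hdetB, htrB, sub_self, Real.exp_zero, div_le_one hprod] at this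
  exact this

section L1Norm

variable {m n : Type*} [Fintype m] [Fintype n]

theorem l1norm_nonneg (A : Matrix m n ℝ) : 0 ≤ l1norm A :=
  Finset.sum_nonneg fun _ _ => Finset.sum_nonneg fun _ _ => abs_nonneg _

@[simp]
theorem l1norm_zero : l1norm (0 : Matrix m n ℝ) = 0 := by
  simp [l1norm]

variable [DecidableEq n]

theorem l1norm_diagonal (d : n → ℝ) : l1norm (diagonal d) = ∑ i, |d i| := by
  simp [l1norm, diagonal_apply, apply_ite abs]

theorem l1norm_diagonal_diag_le (A : Matrix n n ℝ) : l1norm (diagonal A.diag) ≤ l1norm A := by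
  rw [l1norm_diagonal]
  exact Finset.sum_le_sum fun i _ =>
    Finset.single_le_sum (f := fun j => |A i j|) (fun _ _ => abs_nonneg _) (Finset.mem_univ i)

theorem trace_mul_diagonal_diag_add_l1norm_le {S Θ : Matrix n n ℝ} {l1 : ℝ}
    (hl1 : ∀ i j, i ≠ j → |S i j| ≤ l1) :
    (S * diagonal Θ.diag).trace + l1 * l1norm (diagonal Θ.diag)
      ≤ (S * Θ).trace + l1 * l1norm Θ := by
  set f : n → n → ℝ := fun i j => S i j * Θ j i + l1 * |Θ j i|
  have hoff : ∀ i j, i ≠ j → 0 ≤ f i j := fun i j hij => by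
    have h := mul_le_mul_of_nonneg_right (hl1 i j hij) (abs_nonneg (Θ j i))
    rw [← abs_mul] at h
    linarith [neg_abs_le (S i j * Θ j i)]
  have hdiag : (S * diagonal Θ.diag).trace + l1 * l1norm (diagonal Θ.diag) = ∑ i, f i i := by
    simp [f, trace, mul_diagonal, l1norm_diagonal, Finset.mul_sum, Finset.sum_add_distrib]
  have hfull : (S * Θ).trace + l1 * l1norm Θ = ∑ i, ∑ j, f i j := by
    rw [l1norm, Finset.sum_comm]
    simp [f, trace, mul_apply, Finset.mul_sum, Finset.sum_add_distrib]
  rw [hdiag, hfull]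
  refine Finset.sum_le_sum fun i _ => ?_
  rw [← Finset.add_sum_erase _ _ (Finset.mem_univ i)]
  exact le_add_of_nonneg_right <|
    Finset.sum_nonneg fun j hj => hoff i j (Finset.ne_of_mem_erase hj).symm

end L1Norm

theorem l1norm_blocks_diagonal_diag_le {m : Type*} [Fintype m] [DecidableEq m]
    (Θ : Matrix (m ⊕ m) (m ⊕ m) ℝ) :
    l1norm ((diagonal Θ.diag).toBlocks₁₁ - (diagonal Θ.diag).toBlocks₂₂)
        + l1norm ((diagonal Θ.diag).toBlocks₁₂ - (diagonal Θ.diag).toBlocks₂₁)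
      ≤ l1norm (Θ.toBlocks₁₁ - Θ.toBlocks₂₂) + l1norm (Θ.toBlocks₁₂ - Θ.toBlocks₂₁) := by
  have h : (diagonal Θ.diag).toBlocks₁₁ - (diagonal Θ.diag).toBlocks₂₂
      = diagonal (Θ.toBlocks₁₁ - Θ.toBlocks₂₂).diag := by
    rw [toBlocks₁₁_diagonal, toBlocks₂₂_diagonal, diagonal_sub]
    rfl
  rw [h, toBlocks₁₂_diagonal, toBlocks₂₁_diagonal, sub_zero, l1norm_zero, add_zero]
  exact le_add_of_le_of_nonneg (l1norm_diagonal_diag_le _) (l1norm_nonneg _)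

theorem pdglasso_diagonal_decreases_objective_general (q : ℕ)
    (S : Matrix (Fin q ⊕ Fin q) (Fin q ⊕ Fin q) ℝ)
    (l1 l2 : ℝ) (hl2 : 0 ≤ l2)
    (hl1 : ∀ i j : Fin q ⊕ Fin q, i ≠ j → |S i j| ≤ l1)
    (Θ : Matrix (Fin q ⊕ Fin q) (Fin q ⊕ Fin q) ℝ) (hΘ : Θ.PosDef) :
    (Matrix.diagonal fun i => Θ i i).PosDef ∧
      pdObjective S l1 l2 (Matrix.diagonal fun i => Θ i i) ≤ pdObjective S l1 l2 Θ := by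
  change (diagonal Θ.diag).PosDef ∧ pdObjective S l1 l2 (diagonal Θ.diag) ≤ _
  refine ⟨.diagonal fun _ => hΘ.diag_pos, ?_⟩
  have hlogdet : -Real.log (diagonal Θ.diag).det ≤ -Real.log Θ.det := by
    refine neg_le_neg (Real.log_le_log hΘ.det_pos ?_)
    rw [det_diagonal]
    exact hΘ.det_le_prod_diag
  have hlinear := trace_mul_diagonal_diag_add_l1norm_le (Θ := Θ) hl1
  have hblocks := mul_le_mul_of_nonneg_left (l1norm_blocks_diagonal_diag_le Θ) hl2
  unfold pdObjective
  linarith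

/-- Proposition 1, inequality form: if `λ₁ ≥ |s_ij|` for all `i ≠ j`, then
for every positive definite symmetric `Θ`, `diag(Θ)` is positive definite and
`L(diag(Θ)) ≤ L(Θ)`. -/
theorem pdglasso_diagonal_decreases_objective (q : ℕ) (hq : 0 < q)
    (S : Matrix (Fin q ⊕ Fin q) (Fin q ⊕ Fin q) ℝ) (hS : S.IsSymm)
    (l1 l2 : ℝ) (hl2 : 0 ≤ l2)
    (hl1 : ∀ i j : Fin q ⊕ Fin q, i ≠ j → |S i j| ≤ l1)
    (Θ : Matrix (Fin q ⊕ Fin q) (Fin q ⊕ Fin q) ℝ) (hΘ : Θ.PosDef) (hΘs : Θ.IsSymm) :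
    (Matrix.diagonal fun i => Θ i i).PosDef ∧
      pdObjective S l1 l2 (Matrix.diagonal fun i => Θ i i) ≤ pdObjective S l1 l2 Θ :=
  pdglasso_diagonal_decreases_objective_general q S l1 l2 hl2 hl1 Θ hΘ
end

section
/- Let S and Θ be real symmetric matrices indexed by ι = Fin q ⊕ Fin q, let J be the swap permutation matrix, and suppose λ₂ ≥ λ₂^sym. Then trace(S·((Θ + JΘJ)/2)) − trace(S·Θ) ≤ λ₂·(‖Θ_LL − Θ_RR‖₁ + ‖Θ_LR − Θ_RL‖₁). -/
open Matrix Sum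

/-!
Write `Θ^σ` for `Θ` with both indices swapped, so that `JΘJ = Θ^σ`. Since `σ` is an involution,
`tr(S Θ^σ) = tr(S^σ Θ)` and `tr(S^σ Θ^σ) = tr(S Θ)`, which turns the trace gain of symmetrization
into `¼ tr((S^σ - S)(Θ - Θ^σ))`. The entries of `S^σ - S` are bounded by `2λ₂` by hypothesis, and
the blocks of `Θ - Θ^σ` are `±(Θ_LL - Θ_RR)` and `±(Θ_LR - Θ_RL)`, so `‖Θ - Θ^σ‖₁` is twice
the fused penalty.
-/

namespace Matrix

variable {ι R : Type*} [Fintype ι]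

theorem trace_submatrix_equiv [AddCommMonoid R] (A : Matrix ι ι R) (e : ι ≃ ι) :
    trace (A.submatrix e e) = trace A :=
  e.sum_comp fun i => A i i

theorem trace_submatrix_mul_submatrix [NonUnitalNonAssocSemiring R] (e : ι ≃ ι)
    (A B : Matrix ι ι R) :
    trace (A.submatrix e e * B.submatrix e e) = trace (A * B) := by
  rw [submatrix_mul_equiv, trace_submatrix_equiv]

theorem trace_mul_submatrix_of_involutive [NonUnitalNonAssocSemiring R] {e : ι ≃ ι}
    (he : Function.Involutive e) (A B : Matrix ι ι R) :
    trace (A * B.submatrix e e) = trace (A.submatrix e e * B) := by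
  have hA : (A.submatrix e e).submatrix e e = A := by
    rw [submatrix_submatrix, he.comp_self, submatrix_id_id]
  rw [← trace_submatrix_mul_submatrix e (A.submatrix e e) B, hA]

theorem two_mul_trace_mul_submatrix_sub [CommRing R] {e : ι ≃ ι} (he : Function.Involutive e)
    (S Θ : Matrix ι ι R) :
    2 * (trace (S * Θ.submatrix e e) - trace (S * Θ)) =
      trace ((S.submatrix e e - S) * (Θ - Θ.submatrix e e)) := by
  rw [Matrix.sub_mul, Matrix.mul_sub, Matrix.mul_sub, trace_sub, trace_sub, trace_sub,
    trace_submatrix_mul_submatrix, ← trace_mul_submatrix_of_involutive he]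
  ring

end Matrix

theorem trace_mul_le_mul_l1norm {m n : Type*} [Fintype m] [Fintype n] {M : Matrix m n ℝ}
    {c : ℝ} (hM : ∀ i j, |M i j| ≤ c) (N : Matrix n m ℝ) :
    trace (M * N) ≤ c * l1norm N := by
  calc trace (M * N) = ∑ i, ∑ j, M i j * N j i := rfl
    _ ≤ ∑ i, ∑ j, c * |N j i| := by
      refine Finset.sum_le_sum fun i _ => Finset.sum_le_sum fun j _ => ?_
      calc M i j * N j i ≤ |M i j| * |N j i| := (le_abs_self _).trans (abs_mul _ _).le
        _ ≤ c * |N j i| := mul_le_mul_of_nonneg_right (hM i j) (abs_nonneg _)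
    _ = c * l1norm N := by simp only [l1norm, Finset.mul_sum]; exact Finset.sum_comm

theorem l1norm_sub_comm {m n : Type*} [Fintype m] [Fintype n] (A B : Matrix m n ℝ) :
    l1norm (A - B) = l1norm (B - A) := by
  simp only [l1norm, Matrix.sub_apply, abs_sub_comm]

theorem l1norm_eq_sum_toBlocks {m n p r : Type*} [Fintype m] [Fintype n] [Fintype p]
    [Fintype r] (M : Matrix (m ⊕ n) (p ⊕ r) ℝ) :
    l1norm M = l1norm M.toBlocks₁₁ + l1norm M.toBlocks₁₂ + l1norm M.toBlocks₂₁
      + l1norm M.toBlocks₂₂ := by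
  simp only [l1norm, Fintype.sum_sum_type, Finset.sum_add_distrib, toBlocks₁₁, toBlocks₁₂,
    toBlocks₂₁, toBlocks₂₂, of_apply]
  ring

theorem l1norm_sub_submatrix_swap {m : Type*} [Fintype m] (Θ : Matrix (m ⊕ m) (m ⊕ m) ℝ) :
    l1norm (Θ - Θ.submatrix (Equiv.sumComm m m) (Equiv.sumComm m m)) =
      2 * (l1norm (Θ.toBlocks₁₁ - Θ.toBlocks₂₂) + l1norm (Θ.toBlocks₁₂ - Θ.toBlocks₂₁)) := by
  rw [l1norm_eq_sum_toBlocks]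
  change l1norm (Θ.toBlocks₁₁ - Θ.toBlocks₂₂) + l1norm (Θ.toBlocks₁₂ - Θ.toBlocks₂₁)
    + l1norm (Θ.toBlocks₂₁ - Θ.toBlocks₁₂) + l1norm (Θ.toBlocks₂₂ - Θ.toBlocks₁₁) = _
  rw [l1norm_sub_comm Θ.toBlocks₂₁, l1norm_sub_comm Θ.toBlocks₂₂]
  ring

theorem abs_submatrix_swap_sub_le {m : Type*} {S : Matrix (m ⊕ m) (m ⊕ m) ℝ} {c : ℝ}
    (h : ∀ i j, max (|S (inl i) (inl j) - S (inr i) (inr j)| / 2)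
      (|S (inr i) (inl j) - S (inl i) (inr j)| / 2) ≤ c) (a b : m ⊕ m) :
    |(S.submatrix (Equiv.sumComm m m) (Equiv.sumComm m m) - S) a b| ≤ 2 * c := by
  rcases a with i | i <;> rcases b with j | j <;>
  · obtain ⟨hdiag, hoff⟩ := max_le_iff.1 (h i j)
    simp only [Matrix.sub_apply, submatrix_apply, Equiv.sumComm_apply, Sum.swap_inl, Sum.swap_inr]
    first
    | linarith
    | rw [abs_sub_comm]; linarith

theorem Jswap_mul_mul_Jswap (q : ℕ) (Θ : Matrix (Fin q ⊕ Fin q) (Fin q ⊕ Fin q) ℝ) :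
    Jswap q * Θ * Jswap q = Θ.submatrix (Equiv.sumComm _ _) (Equiv.sumComm _ _) := by
  ext (i | i) (j | j) <;>
    simp [Jswap, mul_apply, Fintype.sum_sum_type, fromBlocks, one_apply]

theorem trace_symmetrization_le_penalty_general (q : ℕ)
    (S Θ : Matrix (Fin q ⊕ Fin q) (Fin q ⊕ Fin q) ℝ)
    (l2 : ℝ)
    (hl2 : ∀ i j : Fin q,
      max (|S (inl i) (inl j) - S (inr i) (inr j)| / 2)
          (|S (inr i) (inl j) - S (inl i) (inr j)| / 2) ≤ l2) :
    (S * ((1 / 2 : ℝ) • (Θ + Jswap q * Θ * Jswap q))).trace - (S * Θ).trace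
      ≤ l2 * (l1norm (Θ.toBlocks₁₁ - Θ.toBlocks₂₂) + l1norm (Θ.toBlocks₁₂ - Θ.toBlocks₂₁)) := by
  let σ := Equiv.sumComm (Fin q) (Fin q)
  calc _ = 1 / 4 * trace ((S.submatrix σ σ - S) * (Θ - Θ.submatrix σ σ)) := by
        rw [Jswap_mul_mul_Jswap, ← two_mul_trace_mul_submatrix_sub (e := σ) Sum.swap_leftInverse,
          Matrix.mul_smul, mul_add, trace_smul, trace_add, smul_eq_mul]
        ring
    _ ≤ 1 / 4 * (2 * l2 * l1norm (Θ - Θ.submatrix σ σ)) := by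
      gcongr
      exact trace_mul_le_mul_l1norm (abs_submatrix_swap_sub_le hl2) _
    _ = _ := by rw [l1norm_sub_submatrix_swap]; ring

/-- if `λ₂ ≥ λ₂^sym` then the trace gain of symmetrization is dominated by
the fused penalty: `tr(S Θ̄) − tr(S Θ) ≤ λ₂ (‖Θ_LL − Θ_RR‖₁ + ‖Θ_LR − Θ_RL‖₁)`. -/
theorem trace_symmetrization_le_penalty (q : ℕ) (hq : 0 < q)
    (S Θ : Matrix (Fin q ⊕ Fin q) (Fin q ⊕ Fin q) ℝ) (hS : S.IsSymm) (hΘ : Θ.IsSymm)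
    (l2 : ℝ)
    (hl2 : ∀ i j : Fin q,
      max (|S (inl i) (inl j) - S (inr i) (inr j)| / 2)
          (|S (inr i) (inl j) - S (inl i) (inr j)| / 2) ≤ l2) :
    (S * ((1 / 2 : ℝ) • (Θ + Jswap q * Θ * Jswap q))).trace - (S * Θ).trace
      ≤ l2 * (l1norm (Θ.toBlocks₁₁ - Θ.toBlocks₂₂) + l1norm (Θ.toBlocks₁₂ - Θ.toBlocks₂₁)) :=
  trace_symmetrization_le_penalty_general q S Θ l2 hl2
end
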